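/- Suppose the equation x(k+1) = A(k)x(k) has an exponential dichotomy on ℤ₋ with projection P(k). Then: (a) the unstable subspace N(P(0)) is uniquely determined, i.e. if the equation also has an exponential dichotomy on ℤ₋ with projection Q(k), then N(Q(0)) = N(P(0)); (b) for every subspace W of ℝⁿ with W ⊕ N(P(0)) = ℝⁿ there exists a unique projection family Q(k), k ∈ ℤ₋, satisfying the invariance Q(k+1)A(k) = A(k)Q(k), such that R(Q(0)) = W and the equation has an exponential dichotomy on ℤ₋ with projection Q(k) (for some constants); moreover this Q(k) satisfies N(Q(k)) = N(P(k)) for all k ≤ 0. -/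

import Mathlib

noncomputable section

open scoped BigOperators

/-- ℝⁿ as a Euclidean space. -/
abbrev Euc (n : ℕ) := EuclideanSpace ℝ (Fin n)

/-- The transition matrix `Φ(k,m) = A(k-1) ⋯ A(m)`, with `Φ(m,m) = 1`
(and `Φ(k,m) = 1` when `k ≤ m`). -/
def Phi {n : ℕ} (A : ℤ → (Euc n →L[ℝ] Euc n)) (k m : ℤ) : Euc n →L[ℝ] Euc n :=
  (((List.range (k - m).toNat).map fun i => A (m + i)).reverse).prod

/-- `J` is an interval of integers. -/
def IsIntInterval (J : Set ℤ) : Prop :=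
  ∀ ⦃a b c : ℤ⦄, a ∈ J → b ∈ J → a ≤ c → c ≤ b → c ∈ J

/-- The equation `x(k+1) = A(k) x(k)` has an exponential dichotomy on `J` with
projection family `P`, constant `K` and exponent `α`. -/
structure ExpDichotomyOn {n : ℕ} (A : ℤ → (Euc n →L[ℝ] Euc n)) (J : Set ℤ)
    (P : ℤ → (Euc n →L[ℝ] Euc n)) (K α : ℝ) : Prop where
  one_le_K : 1 ≤ K
  alpha_pos : 0 < α
  proj : ∀ k ∈ J, P k ∘L P k = P k
  rank_const : ∀ k ∈ J, ∀ m ∈ J,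
    Module.finrank ℝ (LinearMap.range (P k : Euc n →ₗ[ℝ] Euc n)) = Module.finrank ℝ (LinearMap.range (P m : Euc n →ₗ[ℝ] Euc n))
  invariance : ∀ m ∈ J, ∀ k ∈ J, m ≤ k → Phi A k m ∘L P m = P k ∘L Phi A k m
  forward : ∀ m ∈ J, ∀ k ∈ J, m ≤ k →
    ‖Phi A k m ∘L P m‖ ≤ K * Real.exp (-α * ((k : ℝ) - (m : ℝ)))
  bijOn : ∀ k : ℤ, k ∈ J → k + 1 ∈ J →
    Set.BijOn (A k) (LinearMap.ker (P k : Euc n →ₗ[ℝ] Euc n) : Set (Euc n)) (LinearMap.ker (P (k + 1) : Euc n →ₗ[ℝ] Euc n) : Set (Euc n))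
  backward : ∃ Ψ : ℤ → ℤ → (Euc n →L[ℝ] Euc n), ∀ m ∈ J, ∀ k ∈ J, m ≤ k →
    (∀ x ∈ LinearMap.ker (P m : Euc n →ₗ[ℝ] Euc n), Ψ m k (Phi A k m x) = x) ∧
    (∀ x ∈ LinearMap.ker (P k : Euc n →ₗ[ℝ] Euc n), Ψ m k x ∈ LinearMap.ker (P m : Euc n →ₗ[ℝ] Euc n) ∧ Phi A k m (Ψ m k x) = x) ∧
    ‖Ψ m k ∘L (1 - P k)‖ ≤ K * Real.exp (-α * ((k : ℝ) - (m : ℝ)))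

/-!
The unstable subspace `N(P(k))` is intrinsic: it consists of the values at time `k` of the
solutions that stay bounded in the past, because `Φ(k,m)P(m)` decays as `m → -∞`.
Given a complement `W` of `N(P(0))`, invariance forces the stable subspace at time `k ≤ 0` to be
`S(k) = Φ(0,k)⁻¹ W`, which complements `N(P(k))` since `Φ(0,k)` maps `N(P(k))` isomorphically
onto `N(P(0))`; so `Q(k)` must be the projection onto `S(k)` along `N(P(k))`. These projections
are uniformly bounded, and a uniformly bounded invariant projection family with the same
kernels as `P` inherits the dichotomy estimates of `P`.
-/

open ContinuousLinearMap

section Transition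

variable {n : ℕ} (A : ℤ → (Euc n →L[ℝ] Euc n))

@[simp]
theorem phi_self (m : ℤ) : Phi A m m = 1 := by
  simp [Phi]

theorem phi_succ {m k : ℤ} (h : m ≤ k) : Phi A (k + 1) m = A k ∘L Phi A k m := by
  have h1 : (k + 1 - m).toNat = (k - m).toNat + 1 := by omega
  have h2 : m + max (k - m) 0 = k := by omega
  simp [Phi, h1, List.range_succ, h2, mul_def]

theorem phi_comp {l m k : ℤ} (hlm : l ≤ m) (hmk : m ≤ k) :
    Phi A k m ∘L Phi A m l = Phi A k l := by
  induction k, hmk using Int.leInduction with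
  | base => simp [one_def]
  | succ k hmk ih => rw [phi_succ A hmk, phi_succ A (hlm.trans hmk), comp_assoc, ih]

theorem phi_succ_comp {m k : ℤ} (h : m + 1 ≤ k) : Phi A k (m + 1) ∘L A m = Phi A k m := by
  rw [← phi_comp A (by omega : m ≤ m + 1) h, phi_succ A le_rfl, phi_self, one_def, comp_id]

theorem phi_comp_eq_comp_phi {Q : ℤ → (Euc n →L[ℝ] Euc n)} {m k : ℤ} (hmk : m ≤ k)
    (hQ : ∀ j, m ≤ j → j < k → Q (j + 1) ∘L A j = A j ∘L Q j) :
    Phi A k m ∘L Q m = Q k ∘L Phi A k m := by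
  induction k, hmk using Int.leInduction with
  | base => simp [one_def]
  | succ k hmk ih =>
    rw [phi_succ A hmk, comp_assoc, ih fun j hj hjk => hQ j hj (by omega), ← comp_assoc,
      ← hQ k hmk (by omega), comp_assoc]

theorem phi_apply_of_forall_succ {f : ℤ → Euc n} {m k : ℤ} (hmk : m ≤ k)
    (hf : ∀ j, m ≤ j → j < k → f (j + 1) = A j (f j)) : Phi A k m (f m) = f k := by
  induction k, hmk using Int.leInduction with
  | base => simp
  | succ k hmk ih =>
    rw [phi_succ A hmk, comp_apply, ih fun j hj hjk => hf j hj (by omega), hf k hmk (by omega)]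

end Transition

namespace ContinuousLinearMap

variable {R M : Type*} [Ring R] [TopologicalSpace M] [AddCommGroup M] [Module R M]

theorem comp_eq_left_of_ker_le {p q : M →L[R] M} (hq : IsIdempotentElem q)
    (h : q.ker ≤ p.ker) : p ∘L q = p :=
  coe_inj.mp ((LinearMap.IsIdempotentElem.comp_eq_left_iff hq.toLinearMap _).mpr h)

theorem one_sub_comp_one_sub_of_ker_eq [IsTopologicalAddGroup M] {p q : M →L[R] M}
    (hq : IsIdempotentElem q) (h : q.ker = p.ker) : (1 - p) ∘L (1 - q) = 1 - q := by
  have hpq : p * q = p := comp_eq_left_of_ker_le hq h.le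
  change (1 - p) * (1 - q) = 1 - q
  simp only [sub_mul, mul_sub, one_mul, mul_one, hpq]
  abel

theorem comp_eq_comp_of_le_comap [IsTopologicalAddGroup M] {e f : M →L[R] M} (T : M →L[R] M)
    (he : IsIdempotentElem e) (hf : IsIdempotentElem f)
    (hrange : e.range ≤ f.range.comap (T : M →ₗ[R] M))
    (hker : e.ker ≤ f.ker.comap (T : M →ₗ[R] M)) : f ∘L T = T ∘L e := by
  ext x
  have hex : e (x - e x) = 0 := by rw [map_sub, ← comp_apply, ← mul_def, he.eq, sub_self]
  have h1 : f (T (e x)) = T (e x) :=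
    (LinearMap.IsIdempotentElem.mem_range_iff hf.toLinearMap).mp (hrange ⟨x, rfl⟩)
  have h2 : f (T (x - e x)) = 0 := hker hex
  rw [map_sub, map_sub, h1, sub_eq_zero] at h2
  exact h2

end ContinuousLinearMap

theorem IsCompl.eq_of_le {α : Type*} [Lattice α] [BoundedOrder α] [IsModularLattice α]
    {a b c : α} (ha : IsCompl a c) (hb : IsCompl b c) (h : a ≤ b) : a = b :=
  eq_of_le_of_inf_le_of_sup_le h (by rw [hb.inf_eq_bot]; exact bot_le)
    (by rw [ha.sup_eq_top, hb.sup_eq_top])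

theorem LinearMap.finrank_range_eq_of_ker_eq {K V V₂ : Type*} [DivisionRing K] [AddCommGroup V]
    [Module K V] [AddCommGroup V₂] [Module K V₂] [FiniteDimensional K V] {f g : V →ₗ[K] V₂}
    (h : ker f = ker g) : Module.finrank K (range f) = Module.finrank K (range g) := by
  have hf := f.finrank_range_add_finrank_ker
  have hg := g.finrank_range_add_finrank_ker
  rw [h] at hf
  omega

def HasBoundedPast {n : ℕ} (A : ℤ → (Euc n →L[ℝ] Euc n)) (k : ℤ) (x : Euc n) : Prop :=
  ∃ f : ℤ → Euc n, f k = x ∧ (∀ m < k, f (m + 1) = A m (f m)) ∧ ∃ C, ∀ m ≤ k, ‖f m‖ ≤ C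

namespace ExpDichotomyOn

variable {n : ℕ} {A P Q : ℤ → (Euc n →L[ℝ] Euc n)} {J : Set ℤ} {K α : ℝ} {m k : ℤ}

theorem K_nonneg (hP : ExpDichotomyOn A J P K α) : 0 ≤ K :=
  zero_le_one.trans hP.one_le_K

theorem exp_le_one (hP : ExpDichotomyOn A J P K α) (hmk : m ≤ k) :
    Real.exp (-α * ((k : ℝ) - m)) ≤ 1 := by
  have hmk' : (m : ℝ) ≤ k := by exact_mod_cast hmk
  rw [Real.exp_le_one_iff]
  nlinarith [hP.alpha_pos]

theorem norm_phi_comp_le (hP : ExpDichotomyOn A J P K α) (hm : m ∈ J) (hk : k ∈ J)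
    (hmk : m ≤ k) : ‖Phi A k m ∘L P m‖ ≤ K :=
  (hP.forward m hm k hk hmk).trans (mul_le_of_le_one_right hP.K_nonneg (hP.exp_le_one hmk))

theorem norm_le (hP : ExpDichotomyOn A J P K α) (hk : k ∈ J) : ‖P k‖ ≤ K := by
  simpa [one_def] using hP.norm_phi_comp_le hk hk le_rfl

theorem phi_mapsTo_ker (hP : ExpDichotomyOn A J P K α) (hm : m ∈ J) (hk : k ∈ J)
    (hmk : m ≤ k) : Set.MapsTo (Phi A k m) (P m).ker (P k).ker := fun x hx => by
  have hx : P m x = 0 := hx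
  change P k (Phi A k m x) = 0
  rw [← comp_apply, ← hP.invariance m hm k hk hmk, comp_apply, hx, map_zero]

theorem phi_surjOn_ker (hP : ExpDichotomyOn A J P K α) (hm : m ∈ J) (hk : k ∈ J)
    (hmk : m ≤ k) : Set.SurjOn (Phi A k m) (P m).ker (P k).ker := fun x hx => by
  obtain ⟨Ψ, hΨ⟩ := hP.backward
  exact ⟨Ψ m k x, (hΨ m hm k hk hmk).2.1 x hx⟩

theorem norm_le_of_mem_ker (hP : ExpDichotomyOn A J P K α) (hm : m ∈ J) (hk : k ∈ J)
    (hmk : m ≤ k) {x : Euc n} (hx : x ∈ (P m).ker) : ‖x‖ ≤ K * ‖Phi A k m x‖ := by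
  obtain ⟨Ψ, hΨ⟩ := hP.backward
  obtain ⟨hleft, -, hbound⟩ := hΨ m hm k hk hmk
  have hy : P k (Phi A k m x) = 0 := hP.phi_mapsTo_ker hm hk hmk hx
  calc ‖x‖ = ‖(Ψ m k ∘L (1 - P k)) (Phi A k m x)‖ := by simp [hy, hleft x hx]
    _ ≤ K * ‖Phi A k m x‖ :=
      le_of_opNorm_le _ (hbound.trans (mul_le_of_le_one_right hP.K_nonneg (hP.exp_le_one hmk))) _

theorem phi_injOn_ker (hP : ExpDichotomyOn A J P K α) (hm : m ∈ J) (hk : k ∈ J)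
    (hmk : m ≤ k) : Set.InjOn (Phi A k m) (P m).ker := fun x hx y hy hxy => by
  have h := hP.norm_le_of_mem_ker hm hk hmk (sub_mem hx hy)
  rw [map_sub, hxy, sub_self, norm_zero, mul_zero, norm_le_zero_iff] at h
  exact sub_eq_zero.mp h

theorem mem_ker_of_hasBoundedPast (hP : ExpDichotomyOn A {k : ℤ | k ≤ 0} P K α) (hk : k ≤ 0)
    {x : Euc n} (hx : HasBoundedPast A k x) : x ∈ (P k).ker := by
  obtain ⟨f, rfl, hf, C, hC⟩ := hx
  have hdecay : ∀ j : ℕ, ‖P k (f k)‖ ≤ K * C * Real.exp (-α) ^ j := by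
    intro j
    have hm : k - j ≤ k := by omega
    have hsol : Phi A k (k - j) (f (k - j)) = f k :=
      phi_apply_of_forall_succ A hm fun i _ hi => hf i hi
    have hexp : Real.exp (-α * ((k : ℝ) - ((k - j : ℤ) : ℝ))) = Real.exp (-α) ^ j := by
      rw [← Real.exp_nat_mul]; push_cast; ring_nf
    calc ‖P k (f k)‖ = ‖(Phi A k (k - j) ∘L P (k - j)) (f (k - j))‖ := by
          rw [hP.invariance _ (hm.trans hk) k hk hm, comp_apply, hsol]
      _ ≤ K * Real.exp (-α) ^ j * C := by
          rw [← hexp]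
          exact le_of_opNorm_le_of_le _ (hP.forward _ (hm.trans hk) k hk hm) (hC _ hm)
      _ = K * C * Real.exp (-α) ^ j := by ring
  have hlim : Filter.Tendsto (fun j : ℕ => K * C * Real.exp (-α) ^ j) Filter.atTop (nhds 0) := by
    simpa using (tendsto_pow_atTop_nhds_zero_of_lt_one (Real.exp_nonneg _)
      (Real.exp_lt_one_iff.mpr (neg_lt_zero.mpr hP.alpha_pos))).const_mul (K * C)
  exact LinearMap.mem_ker.mpr (norm_le_zero_iff.mp (ge_of_tendsto' hlim hdecay))

theorem hasBoundedPast_of_mem_ker (hP : ExpDichotomyOn A {k : ℤ | k ≤ 0} P K α) (hk : k ≤ 0)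
    {x : Euc n} (hx : x ∈ (P k).ker) : HasBoundedPast A k x := by
  set f : ℤ → Euc n := fun m => Function.invFunOn (Phi A k m) (P m).ker x
  have hf : ∀ m ≤ k, f m ∈ (P m).ker ∧ Phi A k m (f m) = x := fun m hm =>
    Function.invFunOn_pos (hP.phi_surjOn_ker (hm.trans hk) hk hm hx)
  refine ⟨f, by simpa using (hf k le_rfl).2, fun m hm => ?_, K * ‖x‖, fun m hm => ?_⟩
  · have hm1 : m + 1 ≤ k := hm
    have hAf : A m (f m) ∈ (P (m + 1)).ker :=
      (hP.bijOn m (show m ≤ 0 by omega) (show m + 1 ≤ 0 by omega)).mapsTo (hf m hm.le).1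
    refine hP.phi_injOn_ker (hm1.trans hk) hk hm1 (hf (m + 1) hm1).1 hAf ?_
    rw [(hf (m + 1) hm1).2, ← comp_apply, phi_succ_comp A hm1, (hf m hm.le).2]
  · calc ‖f m‖ ≤ K * ‖Phi A k m (f m)‖ := hP.norm_le_of_mem_ker (hm.trans hk) hk hm (hf m hm).1
      _ = K * ‖x‖ := by rw [(hf m hm).2]

theorem mem_ker_iff (hP : ExpDichotomyOn A {k : ℤ | k ≤ 0} P K α) (hk : k ≤ 0) {x : Euc n} :
    x ∈ (P k).ker ↔ HasBoundedPast A k x :=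
  ⟨hP.hasBoundedPast_of_mem_ker hk, hP.mem_ker_of_hasBoundedPast hk⟩

theorem ker_eq {K' α' : ℝ} (hQ : ExpDichotomyOn A {k : ℤ | k ≤ 0} Q K' α')
    (hP : ExpDichotomyOn A {k : ℤ | k ≤ 0} P K α) (hk : k ≤ 0) : (Q k).ker = (P k).ker := by
  ext x
  rw [hQ.mem_ker_iff hk, hP.mem_ker_iff hk]

theorem of_ker_eq (hP : ExpDichotomyOn A J P K α) {B : ℝ} (hB : 0 ≤ B)
    (hQ : ∀ k ∈ J, IsIdempotentElem (Q k)) (hker : ∀ k ∈ J, (Q k).ker = (P k).ker)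
    (hinv : ∀ m ∈ J, ∀ k ∈ J, m ≤ k → Phi A k m ∘L Q m = Q k ∘L Phi A k m)
    (hnorm : ∀ k ∈ J, ‖Q k‖ ≤ B) : ExpDichotomyOn A J Q (K * (1 + B)) α where
  one_le_K := by nlinarith [hP.one_le_K]
  alpha_pos := hP.alpha_pos
  proj := hQ
  rank_const k hk m hm := by
    rw [LinearMap.finrank_range_eq_of_ker_eq (hker k hk),
      LinearMap.finrank_range_eq_of_ker_eq (hker m hm)]
    exact hP.rank_const k hk m hm
  invariance := hinv
  forward m hm k hk hmk := by
    have hQP : Q m ∘L P m = Q m := comp_eq_left_of_ker_le (hP.proj m hm) (hker m hm).ge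
    have hexp := Real.exp_pos (-α * ((k : ℝ) - m))
    calc ‖Phi A k m ∘L Q m‖ = ‖Q k ∘L (Phi A k m ∘L P m)‖ := by
          rw [← comp_assoc, ← hinv m hm k hk hmk, comp_assoc, hQP]
      _ ≤ B * (K * Real.exp (-α * ((k : ℝ) - m))) :=
          (opNorm_comp_le _ _).trans
            (mul_le_mul (hnorm k hk) (hP.forward m hm k hk hmk) (norm_nonneg _) hB)
      _ ≤ K * (1 + B) * Real.exp (-α * ((k : ℝ) - m)) := by nlinarith [hP.one_le_K]
  bijOn k hk hk1 := by
    rw [hker k hk, hker (k + 1) hk1]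
    exact hP.bijOn k hk hk1
  backward := by
    obtain ⟨Ψ, hΨ⟩ := hP.backward
    refine ⟨Ψ, fun m hm k hk hmk => ?_⟩
    obtain ⟨hleft, hright, hbound⟩ := hΨ m hm k hk hmk
    rw [hker m hm, hker k hk]
    refine ⟨hleft, hright, ?_⟩
    have hQ1 : ‖1 - Q k‖ ≤ 1 + B := (norm_sub_le _ _).trans (add_le_add norm_id_le (hnorm k hk))
    calc ‖Ψ m k ∘L (1 - Q k)‖ = ‖(Ψ m k ∘L (1 - P k)) ∘L (1 - Q k)‖ := by
          rw [comp_assoc, one_sub_comp_one_sub_of_ker_eq (hQ k hk) (hker k hk)]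
      _ ≤ K * Real.exp (-α * ((k : ℝ) - m)) * (1 + B) :=
          (opNorm_comp_le _ _).trans (mul_le_mul hbound hQ1 (norm_nonneg _)
            (mul_nonneg hP.K_nonneg (Real.exp_nonneg _)))
      _ = K * (1 + B) * Real.exp (-α * ((k : ℝ) - m)) := by ring

/-- `(P m - Q m) x` lies in the unstable subspace at time `m`, where the solutions expand, and at
time `k` it has become `(1 - Q k) Φ(k,m) P(m) x`. -/
theorem norm_le_of_ker_eq (hP : ExpDichotomyOn A J P K α) (hm : m ∈ J) (hk : k ∈ J)
    (hmk : m ≤ k) (hQm : IsIdempotentElem (Q m)) (hker : (Q m).ker = (P m).ker)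
    (hinv : Phi A k m ∘L Q m = Q k ∘L Phi A k m) : ‖Q m‖ ≤ K + K ^ 2 * ‖1 - Q k‖ := by
  have hK := hP.K_nonneg
  refine opNorm_le_bound _ (by positivity) fun x => ?_
  set v := (1 - Q m) (P m x) with hv_def
  have hv : v ∈ (P m).ker := by
    rw [← hker, LinearMap.mem_ker, coe_coe, hv_def, ← comp_apply, ← mul_def, mul_sub, mul_one,
      hQm.eq, sub_self, zero_apply]
  have hQx : Q m x = P m x - v := by
    rw [hv_def, sub_apply, one_apply_eq_self, ← comp_apply (Q m),
      comp_eq_left_of_ker_le (hP.proj m hm) hker.ge, sub_sub_cancel]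
  have hΦv : Phi A k m v = (1 - Q k) ((Phi A k m ∘L P m) x) := by
    have hΦQ : ∀ y, Phi A k m (Q m y) = Q k (Phi A k m y) := fun y => by
      rw [← comp_apply, hinv, comp_apply]
    simp only [hv_def, sub_apply, one_apply_eq_self, map_sub, hΦQ, comp_apply]
  calc ‖Q m x‖ ≤ ‖P m x‖ + ‖v‖ := hQx ▸ norm_sub_le _ _
    _ ≤ K * ‖x‖ + K * (‖1 - Q k‖ * (K * ‖x‖)) := by
        gcongr
        · exact le_of_opNorm_le _ (hP.norm_le hm) x
        · refine (hP.norm_le_of_mem_ker hm hk hmk hv).trans (mul_le_mul_of_nonneg_left ?_ hK)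
          rw [hΦv]
          exact le_of_opNorm_le_of_le _ le_rfl (le_of_opNorm_le _ (hP.norm_phi_comp_le hm hk hmk) x)
    _ = (K + K ^ 2 * ‖1 - Q k‖) * ‖x‖ := by ring

end ExpDichotomyOn

/-- For `k ≤ 0`, the only possible stable subspace at time `k` of a dichotomy with
`R(Q(0)) = W`. -/
def stableSubspace {n : ℕ} (A : ℤ → (Euc n →L[ℝ] Euc n)) (W : Submodule ℝ (Euc n)) (k : ℤ) :
    Submodule ℝ (Euc n) :=
  W.comap (Phi A 0 k : Euc n →ₗ[ℝ] Euc n)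

section StableSubspace

variable {n : ℕ} {A P Q : ℤ → (Euc n →L[ℝ] Euc n)} {W : Submodule ℝ (Euc n)} {K α : ℝ} {k : ℤ}

@[simp]
theorem mem_stableSubspace {x : Euc n} : x ∈ stableSubspace A W k ↔ Phi A 0 k x ∈ W :=
  Iff.rfl

@[simp]
theorem stableSubspace_zero : stableSubspace A W 0 = W := by
  ext x
  simp

theorem comap_stableSubspace_succ (hk : k + 1 ≤ 0) :
    (stableSubspace A W (k + 1)).comap (A k : Euc n →ₗ[ℝ] Euc n) = stableSubspace A W k := by
  ext x
  simp [← comp_apply, phi_succ_comp A hk]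

theorem ExpDichotomyOn.isCompl_stableSubspace (hP : ExpDichotomyOn A {k : ℤ | k ≤ 0} P K α)
    (hW : IsCompl W (P 0).ker) (hk : k ≤ 0) : IsCompl (stableSubspace A W k) (P k).ker := by
  have h0 : (0 : ℤ) ∈ {k : ℤ | k ≤ 0} := le_refl (0 : ℤ)
  constructor
  · refine Submodule.disjoint_def.mpr fun x hxW hxP => ?_
    have hΦx : Phi A 0 k x = 0 :=
      Submodule.disjoint_def.mp hW.disjoint _ hxW (hP.phi_mapsTo_ker hk h0 hk hxP)
    simpa [hΦx] using hP.norm_le_of_mem_ker hk h0 hk hxP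
  · refine codisjoint_iff.mpr (eq_top_iff.mpr fun x _ => ?_)
    obtain ⟨w, u, hw, hu, hwu⟩ :=
      Submodule.codisjoint_iff_exists_add_eq.mp hW.codisjoint (Phi A 0 k x)
    obtain ⟨y, hy, hΦy⟩ := hP.phi_surjOn_ker hk h0 hk hu
    refine Submodule.mem_sup.mpr ⟨x - y, ?_, y, hy, sub_add_cancel x y⟩
    rw [mem_stableSubspace, map_sub, hΦy, ← hwu, add_sub_cancel_right]
    exact hw

theorem ExpDichotomyOn.exists_of_isCompl (hP : ExpDichotomyOn A {k : ℤ | k ≤ 0} P K α)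
    (hW : IsCompl W (P 0).ker) :
    ∃ Q : ℤ → (Euc n →L[ℝ] Euc n),
      (∀ k : ℤ, k + 1 ≤ 0 → Q (k + 1) ∘L A k = A k ∘L Q k) ∧ (Q 0).range = W ∧
      (∃ K' α' : ℝ, ExpDichotomyOn A {k : ℤ | k ≤ 0} Q K' α') ∧
      ∀ k : ℤ, k ≤ 0 → (Q k).ker = (P k).ker := by
  have hproj : ∀ k : ℤ, ∃ Q : Euc n →L[ℝ] Euc n, k ≤ 0 →
      IsIdempotentElem Q ∧ Q.range = stableSubspace A W k ∧ Q.ker = (P k).ker := fun k => by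
    by_cases hk : k ≤ 0
    · have h := Submodule.IsCompl.isTopCompl_of_isClosed_of_finiteDimensional
        (hP.isCompl_stableSubspace hW hk) (Submodule.closed_of_finiteDimensional _)
      exact ⟨_, fun _ => ⟨Submodule.isIdempotentElem_projectionL h, Submodule.range_projectionL h,
        Submodule.ker_projectionL h⟩⟩
    · exact ⟨0, fun h => absurd h hk⟩
  choose Q hQ using hproj
  have hstep : ∀ k : ℤ, k + 1 ≤ 0 → Q (k + 1) ∘L A k = A k ∘L Q k := fun k hk1 => by
    have hk : k ≤ 0 := by omega
    refine comp_eq_comp_of_le_comap (A k) (hQ k hk).1 (hQ (k + 1) hk1).1 ?_ ?_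
    · rw [(hQ k hk).2.1, (hQ (k + 1) hk1).2.1, comap_stableSubspace_succ hk1]
    · rw [(hQ k hk).2.2, (hQ (k + 1) hk1).2.2]
      exact (hP.bijOn k hk hk1).mapsTo
  have hinv : ∀ m ≤ (0 : ℤ), ∀ k ≤ (0 : ℤ), m ≤ k → Phi A k m ∘L Q m = Q k ∘L Phi A k m :=
    fun m _ k hk hmk => phi_comp_eq_comp_phi A hmk fun j _ hj => hstep j (by omega)
  have hB : 0 ≤ K + K ^ 2 * ‖1 - Q 0‖ := by have := hP.K_nonneg; positivity
  refine ⟨Q, hstep, by rw [(hQ 0 le_rfl).2.1, stableSubspace_zero], ⟨_, α, hP.of_ker_eq hB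
    (fun k hk => (hQ k hk).1) (fun k hk => (hQ k hk).2.2) hinv fun k hk => ?_⟩,
    fun k hk => (hQ k hk).2.2⟩
  exact hP.norm_le_of_ker_eq hk (le_refl (0 : ℤ)) hk (hQ k hk).1 (hQ k hk).2.2
    (hinv k hk 0 le_rfl hk)

theorem ExpDichotomyOn.range_eq_stableSubspace {K' α' : ℝ}
    (hQ : ExpDichotomyOn A {k : ℤ | k ≤ 0} Q K' α')
    (hP : ExpDichotomyOn A {k : ℤ | k ≤ 0} P K α) (hW : IsCompl W (P 0).ker)
    (hQW : (Q 0).range = W) (hk : k ≤ 0) :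
    (Q k).range = stableSubspace A W k := by
  refine IsCompl.eq_of_le ?_ (hP.isCompl_stableSubspace hW hk) ?_
  · rw [← hQ.ker_eq hP hk]
    exact (IsIdempotentElem.isTopCompl (hQ.proj k hk)).isCompl
  · rintro _ ⟨x, rfl⟩
    rw [mem_stableSubspace, coe_coe, ← comp_apply, hQ.invariance k hk 0 (le_refl (0 : ℤ)) hk,
      ← hQW]
    exact ⟨_, rfl⟩

end StableSubspace

/-- for an exponential dichotomy on `ℤ₋` with projection `P`:
(a) the unstable subspace `N(P(0))` is uniquely determined;
(b) for every complement `W` of `N(P(0))` there is a unique invariant projection family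
`Q` with `R(Q(0)) = W` with respect to which the equation has an exponential dichotomy
on `ℤ₋`; moreover `N(Q(k)) = N(P(k))` for all `k ≤ 0`. -/
theorem statement5 {n : ℕ} (A P : ℤ → (Euc n →L[ℝ] Euc n)) (K α : ℝ)
    (hED : ExpDichotomyOn A {k : ℤ | k ≤ 0} P K α) :
    (∀ (Q : ℤ → (Euc n →L[ℝ] Euc n)) (K' α' : ℝ),
        ExpDichotomyOn A {k : ℤ | k ≤ 0} Q K' α' →
        LinearMap.ker (Q 0 : Euc n →ₗ[ℝ] Euc n) = LinearMap.ker (P 0 : Euc n →ₗ[ℝ] Euc n)) ∧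
    (∀ W : Submodule ℝ (Euc n), IsCompl W (LinearMap.ker (P 0 : Euc n →ₗ[ℝ] Euc n)) →
      (∃ Q : ℤ → (Euc n →L[ℝ] Euc n),
        (∀ k : ℤ, k + 1 ≤ 0 → Q (k + 1) ∘L A k = A k ∘L Q k) ∧
        LinearMap.range (Q 0 : Euc n →ₗ[ℝ] Euc n) = W ∧
        (∃ K' α' : ℝ, ExpDichotomyOn A {k : ℤ | k ≤ 0} Q K' α') ∧
        (∀ k : ℤ, k ≤ 0 → LinearMap.ker (Q k : Euc n →ₗ[ℝ] Euc n) = LinearMap.ker (P k : Euc n →ₗ[ℝ] Euc n))) ∧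
      (∀ Q Q' : ℤ → (Euc n →L[ℝ] Euc n),
        ((∀ k : ℤ, k + 1 ≤ 0 → Q (k + 1) ∘L A k = A k ∘L Q k) ∧ LinearMap.range (Q 0 : Euc n →ₗ[ℝ] Euc n) = W ∧
          ∃ K' α' : ℝ, ExpDichotomyOn A {k : ℤ | k ≤ 0} Q K' α') →
        ((∀ k : ℤ, k + 1 ≤ 0 → Q' (k + 1) ∘L A k = A k ∘L Q' k) ∧ LinearMap.range (Q' 0 : Euc n →ₗ[ℝ] Euc n) = W ∧
          ∃ K' α' : ℝ, ExpDichotomyOn A {k : ℤ | k ≤ 0} Q' K' α') →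
        ∀ k : ℤ, k ≤ 0 → Q k = Q' k)) := by
  refine ⟨fun Q K' α' hQ => hQ.ker_eq hED le_rfl, fun W hW => ⟨hED.exists_of_isCompl hW, ?_⟩⟩
  rintro Q Q' ⟨-, hQW, _, _, hQ⟩ ⟨-, hQ'W, _, _, hQ'⟩ k hk
  refine IsIdempotentElem.ext (hQ.proj k hk) (hQ'.proj k hk) ⟨?_, ?_⟩
  · rw [hQ.range_eq_stableSubspace hED hW hQW hk, hQ'.range_eq_stableSubspace hED hW hQ'W hk]
  · rw [hQ.ker_eq hED hk, hQ'.ker_eq hED hk]
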